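/- arXiv:1707.08751 — 3 statements merged into one kernel-verified Lean document; each statement's English description precedes it below -/
import Mathlib

section
/- The following are equivalent: (a) every run r : Run is T-Δ-acceptable; (b) for all r, agents i, j, lists X, and times m: honest r m i and X a T-prefix of ledger r m i imply that for all m' ≥ m + Δ, honest r m' j implies X is a T-prefix of ledger r m' j; (c) for all r, agents i, lists X, and times m: honest r m i and X a T-prefix of ledger r m i imply that for all m' ≥ m + Δ, (E_H TP_X) (r, m') holds; (d) for all r, agents i, lists X, and times m: honest r m i and X a T-prefix of ledger r m i imply that the Δ-□-common knowledge (C TP_X) (r, m) holds. -/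
/-- `X` is a `T`-prefix of `L`: `X` is a prefix of `L` and `X.length + T ≤ L.length`. -/
def TPrefix {Tx : Type*} (T : ℕ) (X L : List Tx) : Prop :=
  X <+: L ∧ X.length + T ≤ L.length

/-- The run `r` of a system is `T`-`Δ`-acceptable. -/
def Acceptable {Run Agent Tx : Type*} (T Δ : ℕ) (honest : Run → ℕ → Agent → Prop)
    (ledger : Run → ℕ → Agent → List Tx) (r : Run) : Prop :=
  ∀ (m m' : ℕ) (i j : Agent) (X : List Tx), m ≤ m' → honest r m i →
    TPrefix T X (ledger r m i) → honest r (m' + Δ) j →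
    TPrefix T X (ledger r (m' + Δ) j)

/-- `q ∼_i p`: agent `i` cannot distinguish the points `q` and `p`
(`i`'s local state is the same at both points, and `i` is present at both). -/
def Sim {Run Agent σ : Type*} (localState : Run → ℕ → Agent → Option σ)
    (i : Agent) (q p : Run × ℕ) : Prop :=
  localState p.1 p.2 i = localState q.1 q.2 i ∧ (localState p.1 p.2 i).isSome

/-- The agent-relative formula `TP_X`: "`X` is a `T`-prefix of my ledger". -/
def TP {Run Agent Tx : Type*} (T : ℕ) (ledger : Run → ℕ → Agent → List Tx)
    (X : List Tx) (p : Run × ℕ) (i : Agent) : Prop :=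
  TPrefix T X (ledger p.1 p.2 i)

/-- `(E_H φ) p`: every agent `j` honest at `p` knows (relative to honesty) its
interpretation of `φ`: for every point `q ∼_j p` at which `j` is honest, `φ q j`. -/
def EH {Run Agent σ : Type*} (honest : Run → ℕ → Agent → Prop)
    (localState : Run → ℕ → Agent → Option σ)
    (φ : Run × ℕ → Agent → Prop) (p : Run × ℕ) : Prop :=
  ∀ j, honest p.1 p.2 j → ∀ q, Sim localState j q p → honest q.1 q.2 j → φ q j

/-- `(○^Δ□ φ) (r, m)`: `φ` holds at `(r, m')` for all `m' ≥ m + Δ`. -/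
def NextBox {Run : Type*} (Δ : ℕ) (φ : Run × ℕ → Prop) (p : Run × ℕ) : Prop :=
  ∀ m', p.2 + Δ ≤ m' → φ (p.1, m')

/-- `Iter Δ honest localState n φ` is `(○^Δ□ ∘ E_H)^{n+1} φ`:
`(○^Δ□ ∘ E_H)^1 φ = ○^Δ□(E_H φ)` and
`(○^Δ□ ∘ E_H)^{n+1} φ = ○^Δ□(E_H ((○^Δ□ ∘ E_H)^n φ))`. -/
def Iter {Run Agent σ : Type*} (Δ : ℕ) (honest : Run → ℕ → Agent → Prop)
    (localState : Run → ℕ → Agent → Option σ) :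
    ℕ → (Run × ℕ → Agent → Prop) → (Run × ℕ → Prop)
  | 0, φ => NextBox Δ (EH honest localState φ)
  | n + 1, φ => NextBox Δ (EH honest localState
      (fun q _ => Iter Δ honest localState n φ q))

/-- `Δ`-`□`-common knowledge among the honest agents:
`(C φ) p := ∀ n ≥ 1, ((○^Δ□ ∘ E_H)^n φ) p`. -/
def CK {Run Agent σ : Type*} (Δ : ℕ) (honest : Run → ℕ → Agent → Prop)
    (localState : Run → ℕ → Agent → Option σ)
    (φ : Run × ℕ → Agent → Prop) (p : Run × ℕ) : Prop :=
  ∀ n : ℕ, Iter Δ honest localState n φ p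


/-!
(a) and (b) differ only by the substitution `m' ↦ m' + Δ`. Since `TP_X` is determined by the
local state, `E_H TP_X` at a point just says that `X` is a `T`-prefix of every honest ledger
there, which turns (b) into (c). For (c) → (d) apply the induction rule for common knowledge to
"some honest agent has `X` as a `T`-prefix of its ledger": (c) says that this fact yields
`○^Δ□ E_H` of itself together with `TP_X`, hence `C TP_X`.
-/

section Knowledge

variable {Run Agent σ : Type*} {honest : Run → ℕ → Agent → Prop}
  {localState : Run → ℕ → Agent → Option σ}

theorem Sim.refl_of_honest
    (hpresent : ∀ (r : Run) (m : ℕ) (i : Agent), honest r m i → localState r m i ≠ none)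
    {j : Agent} {p : Run × ℕ} (hj : honest p.1 p.2 j) : Sim localState j p p :=
  ⟨rfl, Option.isSome_iff_ne_none.2 (hpresent _ _ _ hj)⟩

theorem EH.apply_self
    (hpresent : ∀ (r : Run) (m : ℕ) (i : Agent), honest r m i → localState r m i ≠ none)
    {φ : Run × ℕ → Agent → Prop} {p : Run × ℕ} {j : Agent}
    (hφ : EH honest localState φ p) (hj : honest p.1 p.2 j) : φ p j :=
  hφ j hj p (Sim.refl_of_honest hpresent hj) hj

theorem EH.of_forall_honest {φ : Run × ℕ → Agent → Prop}
    (hlocal : ∀ (j : Agent) (q p : Run × ℕ), Sim localState j q p → φ p j → φ q j)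
    {p : Run × ℕ} (h : ∀ j, honest p.1 p.2 j → φ p j) : EH honest localState φ p :=
  fun j hj q hsim _ => hlocal j q p hsim (h j hj)

theorem EH.mono {φ ψ : Run × ℕ → Agent → Prop}
    (h : ∀ q j, honest q.1 q.2 j → φ q j → ψ q j) {p : Run × ℕ}
    (hφ : EH honest localState φ p) : EH honest localState ψ p :=
  fun j hj q hsim hjq => h q j hjq (hφ j hj q hsim hjq)

theorem NextBox.mono {Δ : ℕ} {φ ψ : Run × ℕ → Prop} (h : ∀ q, φ q → ψ q) {p : Run × ℕ}
    (hφ : NextBox Δ φ p) : NextBox Δ ψ p :=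
  fun m' hm' => h _ (hφ m' hm')

theorem CK.of_induction {Δ : ℕ} {φ : Run × ℕ → Agent → Prop} {ψ : Run × ℕ → Prop}
    (hind : ∀ p, ψ p → NextBox Δ (EH honest localState fun q j => φ q j ∧ ψ q) p)
    {p : Run × ℕ} (hψ : ψ p) : CK Δ honest localState φ p := by
  intro n
  induction n generalizing p with
  | zero => exact (hind p hψ).mono fun _ => EH.mono fun _ _ _ h => h.1
  | succ n ih => exact (hind p hψ).mono fun _ => EH.mono fun _ _ _ h => ih h.2

theorem CK.of_someHonest {Δ : ℕ} {φ : Run × ℕ → Agent → Prop}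
    (h : ∀ p i, honest p.1 p.2 i → φ p i → NextBox Δ (EH honest localState φ) p)
    {p : Run × ℕ} {i : Agent} (hi : honest p.1 p.2 i) (hφ : φ p i) :
    CK Δ honest localState φ p :=
  CK.of_induction (ψ := fun q => ∃ j, honest q.1 q.2 j ∧ φ q j)
    (fun q ⟨j, hj, hφj⟩ => (h q j hj hφj).mono fun _ =>
      EH.mono fun _ j' hj' hφ' => ⟨hφ', j', hj', hφ'⟩)
    ⟨i, hi, hφ⟩

end Knowledge

theorem acceptable_iff {Run Agent Tx : Type*} {T Δ : ℕ} {honest : Run → ℕ → Agent → Prop}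
    {ledger : Run → ℕ → Agent → List Tx} {r : Run} :
    Acceptable T Δ honest ledger r ↔
      ∀ (i j : Agent) (X : List Tx) (m : ℕ), honest r m i → TPrefix T X (ledger r m i) →
        ∀ m', m + Δ ≤ m' → honest r m' j → TPrefix T X (ledger r m' j) := by
  constructor
  · intro h i j X m hi hX m' hm'
    obtain ⟨k, rfl⟩ : ∃ k, m' = k + Δ := ⟨m' - Δ, by omega⟩
    exact h m k i j X (by omega) hi hX
  · intro h m m' i j X hm hi hX
    exact h i j X m hi hX (m' + Δ) (by omega)

/-- Theorem 4 (characterization of blockchain protocols): the four conditions are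
equivalent. -/
theorem blockchain_characterization {Run Agent Tx σ : Type*} (T Δ : ℕ)
    (honest : Run → ℕ → Agent → Prop) (ledger : Run → ℕ → Agent → List Tx)
    (localState : Run → ℕ → Agent → Option σ)
    (hpresent : ∀ (r : Run) (m : ℕ) (i : Agent), honest r m i → localState r m i ≠ none)
    (hledger : ∀ (i : Agent) (q p : Run × ℕ), Sim localState i q p →
      ledger q.1 q.2 i = ledger p.1 p.2 i) :
    List.TFAE
      [ -- (a) every run is T-Δ-acceptable
        (∀ r : Run, Acceptable T Δ honest ledger r),
        -- (b)
        (∀ (r : Run) (i j : Agent) (X : List Tx) (m : ℕ),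
          honest r m i → TPrefix T X (ledger r m i) →
          ∀ m', m + Δ ≤ m' → honest r m' j → TPrefix T X (ledger r m' j)),
        -- (c)
        (∀ (r : Run) (i : Agent) (X : List Tx) (m : ℕ),
          honest r m i → TPrefix T X (ledger r m i) →
          ∀ m', m + Δ ≤ m' → EH honest localState (TP T ledger X) (r, m')),
        -- (d)
        (∀ (r : Run) (i : Agent) (X : List Tx) (m : ℕ),
          honest r m i → TPrefix T X (ledger r m i) →
          CK Δ honest localState (TP T ledger X) (r, m)) ] := by
  have tp_local : ∀ X j q p, Sim localState j q p → TP T ledger X p j → TP T ledger X q j :=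
    fun X j q p hsim h => by rwa [TP, hledger j q p hsim]
  tfae_have 1 ↔ 2 := forall_congr' fun _ => acceptable_iff
  tfae_have 2 ↔ 3 := by
    refine ⟨fun hb r i X m hi hX m' hm' => ?_, fun hc r i j X m hi hX m' hm' hj => ?_⟩
    · exact EH.of_forall_honest (tp_local X) fun j hj => hb r i j X m hi hX m' hm' hj
    · exact (hc r i X m hi hX m' hm').apply_self hpresent hj
  tfae_have 3 ↔ 4 := by
    refine ⟨fun hc r i X m hi hX => ?_, fun hd r i X m hi hX => hd r i X m hi hX 0⟩
    exact CK.of_someHonest (fun p i hi hX => hc p.1 i X p.2 hi hX) hi hX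
  tfae_finish
end

section
/- The following are equivalent: (b) for all r : Run, agents i, j, lists X, and times m: honest r m i and X a T-prefix of ledger r m i imply that for all m' ≥ m + Δ, honest r m' j implies X is a T-prefix of ledger r m' j; (c) for all r, agents i, lists X, and times m: honest r m i and X a T-prefix of ledger r m i imply that for all m' ≥ m + Δ, (E_H TP_X) (r, m') holds. -/
section Knowledge

variable {Run Agent σ : Type*} {localState : Run → ℕ → Agent → Option σ}

theorem Sim.refl_of_ne_none {i : Agent} {p : Run × ℕ} (h : localState p.1 p.2 i ≠ none) :
    Sim localState i p p :=
  ⟨rfl, Option.isSome_iff_ne_none.mpr h⟩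

/-- An agent knows a fact determined by its own local state exactly when the fact holds. -/
theorem EH_iff_forall_honest {honest : Run → ℕ → Agent → Prop} {φ : Run × ℕ → Agent → Prop}
    {p : Run × ℕ} (hpresent : ∀ j, honest p.1 p.2 j → localState p.1 p.2 j ≠ none)
    (hφ : ∀ (i : Agent) (q : Run × ℕ), Sim localState i q p → φ p i → φ q i) :
    EH honest localState φ p ↔ ∀ j, honest p.1 p.2 j → φ p j := by
  constructor
  · intro hEH j hj
    exact hEH j hj p (Sim.refl_of_ne_none (hpresent j hj)) hj
  · intro hall j hj q hsim _
    exact hφ j q hsim (hall j hj)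

theorem TP_of_sim {Tx : Type*} {T : ℕ} {ledger : Run → ℕ → Agent → List Tx}
    (hledger : ∀ (i : Agent) (q p : Run × ℕ), Sim localState i q p →
      ledger q.1 q.2 i = ledger p.1 p.2 i)
    {X : List Tx} {i : Agent} {q p : Run × ℕ} (hsim : Sim localState i q p)
    (hp : TP T ledger X p i) : TP T ledger X q i := by
  rwa [TP, hledger i q p hsim]

end Knowledge

/-- Equivalence of conditions (b) and (c) from Theorem 4. -/
theorem blockchain_char_b_iff_c {Run Agent Tx σ : Type*} (T Δ : ℕ)
    (honest : Run → ℕ → Agent → Prop) (ledger : Run → ℕ → Agent → List Tx)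
    (localState : Run → ℕ → Agent → Option σ)
    (hpresent : ∀ (r : Run) (m : ℕ) (i : Agent), honest r m i → localState r m i ≠ none)
    (hledger : ∀ (i : Agent) (q p : Run × ℕ), Sim localState i q p →
      ledger q.1 q.2 i = ledger p.1 p.2 i) :
    (∀ (r : Run) (i j : Agent) (X : List Tx) (m : ℕ),
        honest r m i → TPrefix T X (ledger r m i) →
        ∀ m', m + Δ ≤ m' → honest r m' j → TPrefix T X (ledger r m' j)) ↔
      (∀ (r : Run) (i : Agent) (X : List Tx) (m : ℕ),
        honest r m i → TPrefix T X (ledger r m i) →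
        ∀ m', m + Δ ≤ m' → EH honest localState (TP T ledger X) (r, m')) := by
  simp only [EH_iff_forall_honest (hpresent _ _) (fun _ _ => TP_of_sim hledger), TP]
  constructor
  · intro hb r i X m hi hX m' hm' j hj
    exact hb r i j X m hi hX m' hm' hj
  · intro hc r i j X m hi hX m' hm' hj
    exact hc r i X m hi hX m' hm' j hj
end

section
/- The following are equivalent: (c) for all r : Run, agents i, lists X, and times m: honest r m i and X a T-prefix of ledger r m i imply that for all m' ≥ m + Δ, (E_H TP_X) (r, m') holds; (d) for all r, agents i, lists X, and times m: honest r m i and X a T-prefix of ledger r m i imply that the Δ-□-common knowledge (C TP_X) (r, m) holds. -/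
/-! If an honest agent's `φ` always forces `○^Δ□ E_H φ`, then each honest agent `j` at a later
point `q` it considers possible again holds `φ` at `q`, so the same hypothesis applies at `q`;
induction on the depth of `(○^Δ□ ∘ E_H)^n` gives common knowledge. The converse is depth one. -/

section CommonKnowledge

variable {Run Agent σ : Type*} {Δ : ℕ} {honest : Run → ℕ → Agent → Prop}
  {localState : Run → ℕ → Agent → Option σ} {φ : Run × ℕ → Agent → Prop}

theorem iter_of_forall_nextBox_eh
    (hφ : ∀ r i m, honest r m i → φ (r, m) i → NextBox Δ (EH honest localState φ) (r, m)) :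
    ∀ n r i m, honest r m i → φ (r, m) i → Iter Δ honest localState n φ (r, m)
  | 0, r, i, m, hi, hφi => hφ r i m hi hφi
  | n + 1, r, i, m, hi, hφi => fun _ hm' j hj q hsim hjq =>
      iter_of_forall_nextBox_eh hφ n q.1 j q.2 hjq (hφ r i m hi hφi _ hm' j hj q hsim hjq)

theorem ck_of_forall_nextBox_eh
    (hφ : ∀ r i m, honest r m i → φ (r, m) i → NextBox Δ (EH honest localState φ) (r, m))
    {r : Run} {i : Agent} {m : ℕ} (hi : honest r m i) (hφi : φ (r, m) i) :
    CK Δ honest localState φ (r, m) :=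
  fun n => iter_of_forall_nextBox_eh hφ n r i m hi hφi

theorem CK.nextBox_eh {p : Run × ℕ} (h : CK Δ honest localState φ p) :
    NextBox Δ (EH honest localState φ) p :=
  h 0

end CommonKnowledge

theorem blockchain_char_c_iff_d_general {Run Agent Tx σ : Type*} (T Δ : ℕ)
    (honest : Run → ℕ → Agent → Prop) (ledger : Run → ℕ → Agent → List Tx)
    (localState : Run → ℕ → Agent → Option σ) :
    (∀ (r : Run) (i : Agent) (X : List Tx) (m : ℕ),
        honest r m i → TPrefix T X (ledger r m i) →
        ∀ m', m + Δ ≤ m' → EH honest localState (TP T ledger X) (r, m')) ↔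
      (∀ (r : Run) (i : Agent) (X : List Tx) (m : ℕ),
        honest r m i → TPrefix T X (ledger r m i) →
        CK Δ honest localState (TP T ledger X) (r, m)) :=
  ⟨fun hc _ _ X _ hi hX => ck_of_forall_nextBox_eh (fun r i m => hc r i X m) hi hX,
    fun hd r i X m hi hX => (hd r i X m hi hX).nextBox_eh⟩

/-- Equivalence of conditions (c) and (d) from Theorem 4. -/
theorem blockchain_char_c_iff_d {Run Agent Tx σ : Type*} (T Δ : ℕ)
    (honest : Run → ℕ → Agent → Prop) (ledger : Run → ℕ → Agent → List Tx)
    (localState : Run → ℕ → Agent → Option σ)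
    (hpresent : ∀ (r : Run) (m : ℕ) (i : Agent), honest r m i → localState r m i ≠ none)
    (hledger : ∀ (i : Agent) (q p : Run × ℕ), Sim localState i q p →
      ledger q.1 q.2 i = ledger p.1 p.2 i) :
    (∀ (r : Run) (i : Agent) (X : List Tx) (m : ℕ),
        honest r m i → TPrefix T X (ledger r m i) →
        ∀ m', m + Δ ≤ m' → EH honest localState (TP T ledger X) (r, m')) ↔
      (∀ (r : Run) (i : Agent) (X : List Tx) (m : ℕ),
        honest r m i → TPrefix T X (ledger r m i) →
        CK Δ honest localState (TP T ledger X) (r, m)) :=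
  blockchain_char_c_iff_d_general T Δ honest ledger localState
end
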